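/- arXiv:2003.12472 — 2 statements merged into one kernel-verified Lean document; each statement's English description precedes it below -/
import Mathlib

section
/- For |q| < 1 formally (as formal power series in x over ℚ(q) or with q a variable), the structure function f(x) = exp(∑_{n≥1} (1/n)·((1-q₁ⁿ)(1-q₂ⁿ)/(1+q₃⁻ⁿ))·xⁿ) factorizes as f(x) = (1/(1-x))·β(q₁ q x)·β(q⁻¹q₁⁻¹ x), where β(x) = (qx; q⁴)_∞/(q³x; q⁴)_∞, q² = q₃, and q₁q₂q₃ = 1. -/
/-!
Expanding `log (1 - a p^k)` and summing over `k` first gives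
`log (a; p)_∞ = -∑ₙ aⁿ / (n (1 - pⁿ))`. For `p = q⁴` the two factors of `β(y)` then combine,
via `1 - q⁴ⁿ = (1 - q²ⁿ)(1 + q²ⁿ)`, into `log β(y) = -∑ₙ (qy)ⁿ / (n (1 + q²ⁿ))`.
On the other hand, with `u = q₁ⁿ` and `v = q²ⁿ`,
`(1 - q₁ⁿ)(1 - q₂ⁿ)/(1 + q₃⁻ⁿ) = 1 - (uv + u⁻¹)/(1 + v)`, so the exponent of `f(x)` is
`-log (1 - x) + log β(q₁qx) + log β(x/(q₁q))`, coefficient by coefficient.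
-/

open Complex

theorem norm_pow_lt_one {𝕜 : Type*} [NormedDivisionRing 𝕜] {z : 𝕜} (hz : ‖z‖ < 1) {n : ℕ}
    (hn : n ≠ 0) : ‖z ^ n‖ < 1 := by
  rw [norm_pow]
  exact pow_lt_one₀ (norm_nonneg z) hz hn

theorem one_add_ne_zero_of_norm_lt_one {R : Type*} [NormedRing R] [HasSummableGeomSeries R]
    [Nontrivial R] {z : R} (hz : ‖z‖ < 1) : 1 + z ≠ 0 := by
  simpa using (isUnit_one_sub_of_norm_lt_one (x := -z) (by rwa [norm_neg])).ne_zero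

section QPochhammer

variable {a p : ℂ}

theorem summable_mul_pow_pow_succ_div (ha : ‖a‖ < 1) (hp : ‖p‖ < 1) :
    Summable fun kn : ℕ × ℕ => (a * p ^ kn.1) ^ (kn.2 + 1) / (kn.2 + 1) := by
  have hgeom : Summable fun kn : ℕ × ℕ => ‖p‖ ^ kn.1 * ‖a‖ ^ kn.2 :=
    (summable_geometric_of_lt_one (norm_nonneg p) hp).mul_of_nonneg
      (summable_geometric_of_lt_one (norm_nonneg a) ha) (fun _ => by positivity)
      (fun _ => by positivity)
  refine hgeom.of_norm_bounded fun ⟨k, n⟩ => ?_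
  have hden : (1 : ℝ) ≤ ‖(n : ℂ) + 1‖ := by norm_cast; simp
  calc ‖(a * p ^ k) ^ (n + 1) / (n + 1)‖ ≤ ‖(a * p ^ k) ^ (n + 1)‖ := by
        rw [norm_div]; exact div_le_self (norm_nonneg _) hden
    _ = (‖p‖ ^ k) ^ (n + 1) * ‖a‖ ^ (n + 1) := by simp [mul_pow, mul_comm]
    _ ≤ ‖p‖ ^ k * ‖a‖ ^ n := by
        gcongr ?_ * ?_
        · exact pow_le_of_le_one (by positivity) (pow_le_one₀ (norm_nonneg p) hp.le) n.succ_ne_zero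
        · exact pow_le_pow_of_le_one (norm_nonneg a) ha.le n.le_succ

theorem exists_hasSum_and_hasProd_one_sub_mul_pow (ha : ‖a‖ < 1) (hp : ‖p‖ < 1) :
    ∃ S, HasSum (fun n : ℕ => a ^ (n + 1) / ((n + 1) * (1 - p ^ (n + 1)))) S ∧
      HasProd (fun k : ℕ => 1 - a * p ^ k) (exp (-S)) := by
  have hF := (summable_mul_pow_pow_succ_div ha hp).hasSum
  have hterm (k : ℕ) : ‖a * p ^ k‖ < 1 := by
    rw [norm_mul, norm_pow]
    exact mul_lt_one_of_nonneg_of_lt_one_left (norm_nonneg a) ha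
      (pow_le_one₀ (norm_nonneg p) hp.le)
  refine ⟨∑' kn : ℕ × ℕ, (a * p ^ kn.1) ^ (kn.2 + 1) / (kn.2 + 1), ?_, ?_⟩
  · refine ((Equiv.prodComm ℕ ℕ).hasSum_iff.mpr hF).prod_fiberwise fun n => ?_
    have hrow := (hasSum_geometric_of_norm_lt_one (norm_pow_lt_one hp n.succ_ne_zero)).mul_left
      (a ^ (n + 1) / (n + 1))
    rw [← div_eq_mul_inv, div_div] at hrow
    have hterms : (fun k : ℕ => a ^ (n + 1) / (n + 1) * (p ^ (n + 1)) ^ k) =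
        fun k => (a * p ^ k) ^ (n + 1) / (n + 1) := by
      ext k; ring
    rwa [hterms] at hrow
  · refine hasProd_of_hasSum_log (fun k => (isUnit_one_sub_of_norm_lt_one (hterm k)).ne_zero) ?_
    have hcol (k : ℕ) :
        HasSum (fun n : ℕ => (a * p ^ k) ^ (n + 1) / (n + 1)) (-log (1 - a * p ^ k)) :=
      hasSum_taylorSeries_neg_log' (hterm k)
    simpa only [neg_neg] using (hF.prod_fiberwise hcol).neg

end QPochhammer

theorem exists_hasSum_and_qPochhammer_ratio_eq_exp {q y : ℂ} (hq : ‖q‖ < 1) (hy : ‖q * y‖ < 1) :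
    ∃ L, HasSum (fun n : ℕ => (q * y) ^ (n + 1) / ((n + 1) * (1 + (q ^ 2) ^ (n + 1)))) L ∧
      (∏' k : ℕ, (1 - q * y * q ^ (4 * k))) / (∏' k : ℕ, (1 - q ^ 3 * y * q ^ (4 * k))) =
        exp (-L) := by
  have hq2 : ‖q ^ 2‖ < 1 := norm_pow_lt_one hq two_ne_zero
  have hy3 : ‖q ^ 2 * (q * y)‖ < 1 := by
    rw [norm_mul]; exact mul_lt_one_of_nonneg_of_lt_one_left (norm_nonneg _) hq2 hy.le
  obtain ⟨S, hS, hprodS⟩ :=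
    exists_hasSum_and_hasProd_one_sub_mul_pow hy (norm_pow_lt_one hq four_ne_zero)
  obtain ⟨T, hT, hprodT⟩ :=
    exists_hasSum_and_hasProd_one_sub_mul_pow hy3 (norm_pow_lt_one hq four_ne_zero)
  refine ⟨S - T, ?_, ?_⟩
  · have hterms : (fun n : ℕ => (q * y) ^ (n + 1) / ((n + 1) * (1 - (q ^ 4) ^ (n + 1))) -
          (q ^ 2 * (q * y)) ^ (n + 1) / ((n + 1) * (1 - (q ^ 4) ^ (n + 1)))) =
        fun n : ℕ => (q * y) ^ (n + 1) / ((n + 1) * (1 + (q ^ 2) ^ (n + 1))) := by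
      ext n
      have hv := norm_pow_lt_one hq2 n.succ_ne_zero
      have hv₁ := (isUnit_one_sub_of_norm_lt_one hv).ne_zero
      have hv₂ := one_add_ne_zero_of_norm_lt_one hv
      rw [show (q ^ 4) ^ (n + 1) = ((q ^ 2) ^ (n + 1)) ^ 2 by ring, mul_pow (q ^ 2)]
      generalize (q ^ 2) ^ (n + 1) = v at hv₁ hv₂ ⊢
      rw [show 1 - v ^ 2 = (1 - v) * (1 + v) by ring]
      field_simp
    rw [← hterms]
    exact hS.sub hT
  · have hprod (c : ℂ) :
        (fun k : ℕ => 1 - c * y * q ^ (4 * k)) = fun k => 1 - c * y * (q ^ 4) ^ k := by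
      ext k; rw [pow_mul]
    rw [hprod, hprod, hprodS.tprod_eq, show q ^ 3 = q ^ 2 * q by ring, mul_assoc (q ^ 2),
      hprodT.tprod_eq, ← exp_sub]
    ring_nf

theorem one_sub_mul_one_sub_inv_div_one_add_inv {K : Type*} [Field K] {u v : K} (hu : u ≠ 0)
    (hv : v ≠ 0) (hv₁ : 1 + v ≠ 0) :
    (1 - u) * (1 - (u * v)⁻¹) / (1 + v⁻¹) = 1 - (u * v + u⁻¹) / (1 + v) := by
  have : v + 1 ≠ 0 := by rwa [add_comm]
  field_simp
  ring

/-- Factorization of the structure function of the deformed Virasoro algebra: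
`f(x)·(1-x) = β(q₁qx)·β(q₁⁻¹q⁻¹x)`, where `q₃ = q²`, `q₂ = (q₁q₃)⁻¹`,
`β(y) = (qy; q⁴)_∞/(q³y; q⁴)_∞` and
`f(y) = exp(∑_{n≥1} (1/n)·(1-q₁ⁿ)(1-q₂ⁿ)/(1+q₃⁻ⁿ)·yⁿ)`. -/
theorem structure_function_factorization (q q₁ x : ℂ)
    (hq : ‖q‖ < 1) (hq0 : q ≠ 0) (hq₁ : q₁ ≠ 0)
    (hx : ‖x‖ < 1) (h1 : ‖q₁ * q ^ 2 * x‖ < 1) (h2 : ‖x / q₁‖ < 1) :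
    let q₃ : ℂ := q ^ 2
    let q₂ : ℂ := (q₁ * q₃)⁻¹
    let β : ℂ → ℂ := fun y =>
      (∏' k : ℕ, (1 - q * y * q ^ (4 * k))) / (∏' k : ℕ, (1 - q ^ 3 * y * q ^ (4 * k)))
    let f : ℂ → ℂ := fun y => Complex.exp (∑' n : ℕ,
      (1 / (n + 1 : ℂ)) * ((1 - q₁ ^ (n + 1)) * (1 - q₂ ^ (n + 1)) / (1 + (q₃⁻¹) ^ (n + 1)))
        * y ^ (n + 1))
    f x * (1 - x) = β (q₁ * q * x) * β ((q₁ * q)⁻¹ * x) := by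
  intro q₃ q₂ β f
  have hy₂ : q * ((q₁ * q)⁻¹ * x) = x / q₁ := by field_simp
  obtain ⟨L₁, hL₁, hβ₁⟩ := exists_hasSum_and_qPochhammer_ratio_eq_exp (y := q₁ * q * x) hq
    (by rwa [show q * (q₁ * q * x) = q₁ * q ^ 2 * x by ring])
  obtain ⟨L₂, hL₂, hβ₂⟩ :=
    exists_hasSum_and_qPochhammer_ratio_eq_exp (y := (q₁ * q)⁻¹ * x) hq (by rwa [hy₂])
  have hterms : (fun n : ℕ => x ^ (n + 1) / (n + 1) -
      (q * (q₁ * q * x)) ^ (n + 1) / ((n + 1) * (1 + (q ^ 2) ^ (n + 1))) -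
      (q * ((q₁ * q)⁻¹ * x)) ^ (n + 1) / ((n + 1) * (1 + (q ^ 2) ^ (n + 1)))) =
      fun n : ℕ => (1 / (n + 1 : ℂ)) * ((1 - q₁ ^ (n + 1)) * (1 - q₂ ^ (n + 1)) /
        (1 + (q₃⁻¹) ^ (n + 1))) * x ^ (n + 1) := by
    ext n
    have hv := one_add_ne_zero_of_norm_lt_one
      (norm_pow_lt_one (norm_pow_lt_one hq two_ne_zero) n.succ_ne_zero)
    rw [show (q * (q₁ * q * x)) ^ (n + 1) = q₁ ^ (n + 1) * (q ^ 2) ^ (n + 1) * x ^ (n + 1) by ring,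
      hy₂, div_pow, div_eq_inv_mul,
      show q₂ ^ (n + 1) = (q₁ ^ (n + 1) * (q ^ 2) ^ (n + 1))⁻¹ by rw [inv_pow, mul_pow],
      inv_pow, one_sub_mul_one_sub_inv_div_one_add_inv (pow_ne_zero _ hq₁)
        (pow_ne_zero _ (pow_ne_zero _ hq0)) hv]
    field_simp
    ring
  have hf := ((hasSum_taylorSeries_neg_log' hx).sub hL₁).sub hL₂
  rw [hterms] at hf
  have hx₁ := (isUnit_one_sub_of_norm_lt_one hx).ne_zero
  dsimp only [f, β]
  rw [hf.tsum_eq, hβ₁, hβ₂, sub_sub, sub_eq_add_neg, exp_add, exp_neg, exp_log hx₁, ← exp_add,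
    neg_add]
  field_simp
end

section
/- In the twisted deformed Virasoro algebra, provided f₀ ≠ 0, every element T_{s₁}⋯T_{s_k}|∅⟩ of the Verma module can be written as a linear combination of ordered monomials T_{-r_m}⋯T_{-r_1}|∅⟩ with 0 < r₁ ≤ r₂ ≤ ⋯ ≤ r_m (r_i ∈ 1/2 + ℤ_{≥0}); i.e., the spanning (pre-PBW) property holds. -/
section Aux

variable {K M : Type*} [Field K] [AddCommGroup M] [Module K M]

/-- The set of ordered monomials of total degree `d` and length at most `k`. -/
private def SsSet (T : ℤ → Module.End K M) (vac : M) (d : ℤ) (k : ℕ) : Set M :=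
  {v | ∃ J : List ℤ, (∀ r ∈ J, Odd r ∧ 0 < r) ∧ J.Pairwise (· ≥ ·) ∧ J.sum = d ∧
    J.length ≤ k ∧ v = J.foldr (fun r w => T (-r) w) vac}

private lemma SsSet_mono (T : ℤ → Module.End K M) (vac : M) (d : ℤ) {k₁ k₂ : ℕ}
    (h : k₁ ≤ k₂) : SsSet T vac d k₁ ⊆ SsSet T vac d k₂ := by
  rintro v ⟨J, h1, h2, h3, h4, h5⟩
  exact ⟨J, h1, h2, h3, h4.trans h, h5⟩

private lemma foldr_map_neg (T : ℤ → Module.End K M) (vac : M) (L : List ℤ) :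
    (L.map (fun x => -x)).foldr (fun r w => T r w) vac
      = L.foldr (fun r w => T (-r) w) vac := by
  induction L with
  | nil => rfl
  | cons a L ih => simp [ih]

/-- Vanishing lemma: every monomial vector is killed by `T s` for all large `s`. -/
private lemma twisted_vanish (T : ℤ → Module.End K M) (vac : M)
    (f : ℕ → K) (hf0 : f 0 = 1) (c p : K)
    (hvac : ∀ r : ℤ, Odd r → 0 < r → T r vac = 0)
    (hrel : ∀ r s : ℤ, Odd r → Odd s → ∀ v : M,
      ∑ᶠ l : ℕ, f l • ((T (r - 2 * l)) ((T (s + 2 * l)) v)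
          - (T (s - 2 * l)) ((T (r + 2 * l)) v))
        = (if r + s = 0 then c * (p ^ (-r) - p ^ r) else 0) • v) :
    ∀ L : List ℤ, (∀ r ∈ L, Odd r) →
      ∃ N : ℤ, ∀ s : ℤ, Odd s → N < s → T s (L.foldr (fun r w => T r w) vac) = 0 := by
  intro L
  induction L with
  | nil =>
    exact fun _ => ⟨0, fun s hs h => by simpa using hvac s hs h⟩
  | cons t0 L ih =>
    intro hodd
    obtain ⟨N, hN⟩ := ih fun r hr => hodd r (List.mem_cons_of_mem _ hr)
    have ht0 : Odd t0 := hodd t0 (List.mem_cons_self)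
    set w : M := L.foldr (fun r w => T r w) vac with hw
    have inner : ∀ (j : ℕ) (t : ℤ), Odd t → (N + 2 - t).toNat < j →
        ∃ N' : ℤ, ∀ s : ℤ, Odd s → N' < s → T s (T t w) = 0 := by
      intro j
      induction j with
      | zero => intro t _ h; exact absurd h (by omega)
      | succ j ihj =>
        intro t ht hmj
        by_cases htN : N < t
        · exact ⟨0, fun s hs _ => by rw [hN t ht htN, map_zero]⟩
        · push_neg at htN
          have H : ∀ i : ℕ, ∃ B : ℤ, ∀ s : ℤ, Odd s → B < s →
              T s (T (t + 2 * ((i : ℤ) + 1)) w) = 0 := by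
            intro i
            exact ihj (t + 2 * ((i : ℤ) + 1)) (ht.add_even (even_two_mul _)) (by omega)
          choose B hB using H
          set m : ℕ := (N - t).toNat with hm
          set C : ℕ := (Finset.range m).sup (fun i => (B i + 2 * ((i : ℤ) + 1)).toNat)
            with hC
          refine ⟨max (max N (-t)) (C : ℤ), ?_⟩
          intro s hs hsgt
          have hNs : N < s := lt_of_le_of_lt ((le_max_left N (-t)).trans (le_max_left _ _)) hsgt
          have hts : -t < s := lt_of_le_of_lt ((le_max_right N (-t)).trans (le_max_left _ _)) hsgt
          have hCs : ∀ i : ℕ, i < m → B i + 2 * ((i : ℤ) + 1) < s := by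
            intro i hi
            have h1 : B i + 2 * ((i : ℤ) + 1) ≤ ((B i + 2 * ((i : ℤ) + 1)).toNat : ℤ) :=
              Int.self_le_toNat _
            have h2n : (B i + 2 * ((i : ℤ) + 1)).toNat ≤ C := by
              rw [hC]
              exact Finset.le_sup (f := fun i : ℕ => (B i + 2 * ((i : ℤ) + 1)).toNat)
                (Finset.mem_range.mpr hi)
            have h2 : (((B i + 2 * ((i : ℤ) + 1)).toNat : ℕ) : ℤ) ≤ (C : ℤ) :=
              Nat.cast_le.mpr h2n
            exact lt_of_le_of_lt (h1.trans h2)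
              (lt_of_le_of_lt (le_max_right _ _) hsgt)
          have hsupp : Function.support (fun l : ℕ => f l • ((T (s - 2 * (l : ℤ)))
                ((T (t + 2 * (l : ℤ))) w) - (T (t - 2 * (l : ℤ))) ((T (s + 2 * (l : ℤ))) w)))
              ⊆ ↑(Finset.range 1) := by
            intro l hl
            simp only [Function.mem_support] at hl
            simp only [Finset.coe_range, Set.mem_Iio]
            by_contra hc
            push_neg at hc
            have hl1 : 1 ≤ l := hc
            have h2 : T (s + 2 * (l : ℤ)) w = 0 :=
              hN _ (hs.add_even (even_two_mul _)) (by omega)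
            by_cases hcase : N < t + 2 * (l : ℤ)
            · have h1 : T (t + 2 * (l : ℤ)) w = 0 :=
                hN _ (ht.add_even (even_two_mul _)) hcase
              exact hl (by simp [h1, h2])
            · push_neg at hcase
              have hlm : l - 1 < m := by omega
              have hb := hB (l - 1) (s - 2 * (l : ℤ)) (hs.sub_even (even_two_mul _))
                (by have := hCs (l - 1) hlm; omega)
              rw [show ((l - 1 : ℕ) : ℤ) + 1 = (l : ℤ) by omega] at hb
              exact hl (by simp [hb, h2])
          have key := hrel s t hs ht w
          rw [finsum_eq_finset_sum_of_support_subset _ hsupp,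
            if_neg (by omega : ¬(s + t = 0)), zero_smul] at key
          simp only [Finset.sum_range_one, Nat.cast_zero, mul_zero, add_zero, sub_zero,
            hf0, one_smul] at key
          rw [hN s hs hNs, map_zero, sub_zero] at key
          exact key
    obtain ⟨N', hN'⟩ := inner ((N + 2 - t0).toNat + 1) t0 ht0 (Nat.lt_succ_self _)
    refine ⟨N', fun s hs hlt => ?_⟩
    have := hN' s hs hlt
    rw [hw] at this
    simpa using this

/-- The straightening lemma: applying `T t` to an ordered monomial lands in the span of
ordered monomials of the appropriate degree, with length growing by at most one. -/
private lemma straighten_aux (T : ℤ → Module.End K M) (vac : M)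
    (f : ℕ → K) (hf0 : f 0 = 1) (c p : K)
    (hvac : ∀ r : ℤ, Odd r → 0 < r → T r vac = 0)
    (hrel : ∀ r s : ℤ, Odd r → Odd s → ∀ v : M,
      ∑ᶠ l : ℕ, f l • ((T (r - 2 * l)) ((T (s + 2 * l)) v)
          - (T (s - 2 * l)) ((T (r + 2 * l)) v))
        = (if r + s = 0 then c * (p ^ (-r) - p ^ r) else 0) • v) :
    ∀ (k n : ℕ) (t : ℤ) (L : List ℤ), L.length < k → (t + L.sum).toNat < n →
      Odd t → (∀ r ∈ L, Odd r ∧ 0 < r) → L.Pairwise (· ≥ ·) →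
      T t (L.foldr (fun r w => T (-r) w) vac) ∈
        Submodule.span K (SsSet T vac (L.sum - t) (L.length + 1)) := by
  intro k
  induction k with
  | zero => intro n t L h _ _ _ _; exact absurd h (by omega)
  | succ k ihk =>
    intro n
    induction n with
    | zero => intro t L _ h _ _ _; exact absurd h (by omega)
    | succ n ihn =>
      intro t L hlen hmeas ht hL hsort
      -- helper: applying T b to an element of a span of ordered monomials
      have outer : ∀ (b e : ℤ) (j : ℕ), Odd b → j ≤ k → (b + e).toNat < n →
          ∀ x, x ∈ Submodule.span K (SsSet T vac e j) →
            T b x ∈ Submodule.span K (SsSet T vac (e - b) (j + 1)) := by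
        intro b e j hb hj hmn x hx
        refine Submodule.span_induction (p := fun x _ =>
          T b x ∈ Submodule.span K (SsSet T vac (e - b) (j + 1))) ?_ ?_ ?_ ?_ hx
        · intro y hy
          obtain ⟨J, hJ1, hJ2, hJ3, hJ4, rfl⟩ := hy
          show T b (J.foldr (fun r w => T (-r) w) vac) ∈
            Submodule.span K (SsSet T vac (e - b) (j + 1))
          have hmem := ihn b J (by omega) (by rw [hJ3]; exact hmn) hb hJ1 hJ2
          rw [hJ3] at hmem
          exact Submodule.span_mono (SsSet_mono T vac (e - b) (by omega)) hmem
        · show T b (0 : M) ∈ Submodule.span K (SsSet T vac (e - b) (j + 1))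
          rw [map_zero]; exact zero_mem _
        · intro x y _ _ hx hy
          show T b (x + y) ∈ Submodule.span K (SsSet T vac (e - b) (j + 1))
          rw [map_add]; exact add_mem hx hy
        · intro a x _ hx
          show T b (a • x) ∈ Submodule.span K (SsSet T vac (e - b) (j + 1))
          rw [map_smul]; exact Submodule.smul_mem _ _ hx
      cases L with
      | nil =>
        simp only [List.foldr_nil, List.sum_nil, List.length_nil]
        have ht0 : t ≠ 0 := by rcases ht with ⟨j, hj⟩; omega
        by_cases hpos : 0 < t
        · rw [hvac t ht hpos]; exact zero_mem _
        · apply Submodule.subset_span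
          refine ⟨[-t], ?_, List.pairwise_singleton _ _, by simp, by simp, by simp⟩
          intro x hx
          simp only [List.mem_singleton] at hx
          subst hx
          exact ⟨ht.neg, by omega⟩
      | cons r L' =>
        obtain ⟨hr_odd, hr_pos⟩ := hL r (List.mem_cons_self)
        have hL' : ∀ x ∈ L', Odd x ∧ 0 < x := fun x hx => hL x (List.mem_cons_of_mem _ hx)
        have hr_ge : ∀ b ∈ L', r ≥ b := (List.pairwise_cons.mp hsort).1
        have hsort' : L'.Pairwise (· ≥ ·) := (List.pairwise_cons.mp hsort).2
        have hsum0 : 0 ≤ L'.sum := List.sum_nonneg (fun x hx => (hL' x hx).2.le)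
        simp only [List.sum_cons] at hmeas
        simp only [List.length_cons] at hlen
        simp only [List.foldr_cons, List.sum_cons, List.length_cons]
        by_cases hcase : t ≤ -r
        · apply Submodule.subset_span
          refine ⟨(-t) :: r :: L', ?_, ?_, by simp only [List.sum_cons]; ring, by simp, by simp [neg_neg]⟩
          · intro x hx
            rcases List.mem_cons.mp hx with h | h
            · subst h; exact ⟨ht.neg, by omega⟩
            · exact hL x h
          · refine List.pairwise_cons.mpr ⟨?_, hsort⟩
            intro b hb
            rcases List.mem_cons.mp hb with h | h
            · subst h; omega
            · have := hr_ge b h; omega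
        · push_neg at hcase
          set v' : M := L'.foldr (fun r w => T (-r) w) vac with hv'
          -- vanishing bound for v'
          obtain ⟨N, hN0⟩ := twisted_vanish T vac f hf0 c p hvac hrel
            (L'.map (fun x => -x))
            (by intro x hx
                obtain ⟨y, hy, rfl⟩ := List.mem_map.mp hx
                exact (hL' y hy).1.neg)
          have hN : ∀ s : ℤ, Odd s → N < s → T s v' = 0 := by
            intro s hs hlt
            have := hN0 s hs hlt
            rwa [foldr_map_neg] at this
          set m1 : ℕ := N.toNat + r.natAbs + t.natAbs with hm1
          have hsupp : Function.support (fun l : ℕ => f l • ((T (t - 2 * (l : ℤ)))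
                ((T (-r + 2 * (l : ℤ))) v') - (T (-r - 2 * (l : ℤ)))
                ((T (t + 2 * (l : ℤ))) v')))
              ⊆ ↑(Finset.range (m1 + 1)) := by
            intro l hl
            simp only [Function.mem_support] at hl
            simp only [Finset.coe_range, Set.mem_Iio]
            by_contra hc
            push_neg at hc
            have h1 : T (-r + 2 * (l : ℤ)) v' = 0 :=
              hN _ (hr_odd.neg.add_even (even_two_mul _)) (by omega)
            have h2 : T (t + 2 * (l : ℤ)) v' = 0 :=
              hN _ (ht.add_even (even_two_mul _)) (by omega)
            exact hl (by simp [h1, h2])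
          have key := hrel t (-r) ht hr_odd.neg v'
          rw [finsum_eq_finset_sum_of_support_subset _ hsupp] at key
          rw [Finset.sum_range_succ'] at key
          simp only [Nat.cast_zero, mul_zero, add_zero, sub_zero, hf0, one_smul] at key
          -- key : A + (X - Y) = R ; rearrange to X = R - A + Y
          have hX := sub_eq_iff_eq_add.mp (eq_sub_of_add_eq' key)
          rw [hX]
          refine add_mem (sub_mem ?_ ?_) ?_
          · -- the scalar (delta) term
            by_cases hd : t + -r = 0
            · refine Submodule.smul_mem _ _ (Submodule.subset_span ?_)
              exact ⟨L', hL', hsort', by omega, by omega, rfl⟩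
            · rw [if_neg hd, zero_smul]; exact zero_mem _
          · -- the correction sum
            refine Submodule.sum_mem _ ?_
            intro i hi
            refine Submodule.smul_mem _ _ (sub_mem ?_ ?_)
            · -- T (t - 2(i+1)) (T (-r + 2(i+1)) v')
              push_cast
              have hin := ihk ((-r + 2 * ((i : ℤ) + 1) + L'.sum).toNat + 1)
                (-r + 2 * ((i : ℤ) + 1)) L' (by omega) (Nat.lt_succ_self _)
                (hr_odd.neg.add_even (even_two_mul _)) hL' hsort'
              have hout := outer (t - 2 * ((i : ℤ) + 1))
                (L'.sum - (-r + 2 * ((i : ℤ) + 1))) (L'.length + 1)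
                (ht.sub_even (even_two_mul _)) (by omega) (by omega) _ hin
              rw [show L'.sum - (-r + 2 * ((i : ℤ) + 1)) - (t - 2 * ((i : ℤ) + 1))
                = r + L'.sum - t by ring] at hout
              exact hout
            · -- T (-r - 2(i+1)) (T (t + 2(i+1)) v')
              push_cast
              have hin := ihk ((t + 2 * ((i : ℤ) + 1) + L'.sum).toNat + 1)
                (t + 2 * ((i : ℤ) + 1)) L' (by omega) (Nat.lt_succ_self _)
                (ht.add_even (even_two_mul _)) hL' hsort'
              have hout := outer (-r - 2 * ((i : ℤ) + 1))
                (L'.sum - (t + 2 * ((i : ℤ) + 1))) (L'.length + 1)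
                (hr_odd.neg.sub_even (even_two_mul _)) (by omega) (by omega) _ hin
              rw [show L'.sum - (t + 2 * ((i : ℤ) + 1)) - (-r - 2 * ((i : ℤ) + 1))
                = r + L'.sum - t by ring] at hout
              exact hout
          · -- T (-r) (T t v')
            have hin := ihk ((t + L'.sum).toNat + 1) t L' (by omega) (Nat.lt_succ_self _)
              ht hL' hsort'
            have hout := outer (-r) (L'.sum - t) (L'.length + 1) hr_odd.neg
              (by omega) (by omega) _ hin
            rw [show L'.sum - t - -r = r + L'.sum - t by ring] at hout
            exact hout

end Aux

/-- Pre-PBW spanning property for the twisted deformed Virasoro algebra.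

Half-integers `r ∈ 1/2 + ℤ` are encoded by their doubles, i.e. by odd integers; the
generator `T_{r/2}` is written `T r` for odd `r : ℤ`, and `q₃^{r/2}` is written `p ^ r`
where `p` is a square root of `q₃`.  `M` is graded by submodules `D d` (degrees doubled),
with `deg T_{-r} = r`, finite-dimensional graded pieces, a highest weight vector
`vac` killed by all `T r`, `r > 0`, and generating `M` under arbitrary monomials in the
`T`'s.  The quadratic relations
`∑_{l≥0} f_l (T_{r-l}T_{s+l} - T_{s-l}T_{r+l}) = c(q₃^{-r} - q₃^r)δ_{r+s,0}` (with
`f₀ = 1`, locally finite sums, written via `∑ᶠ`) imply that `M` is spanned by the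
ordered monomials `T_{-r_m}⋯T_{-r_1}|∅⟩` with `0 < r₁ ≤ ⋯ ≤ r_m`. -/
theorem twisted_verma_spanning {K M : Type*} [Field K] [AddCommGroup M] [Module K M]
    (T : ℤ → Module.End K M) (vac : M)
    (f : ℕ → K) (hf0 : f 0 = 1) (c p : K) (hp : p ≠ 0)
    (D : ℤ → Submodule K M)
    (hDtop : (⨆ d, D d) = ⊤)
    (hDfin : ∀ d, FiniteDimensional K (D d))
    (hvacD : vac ∈ D 0)
    (hTD : ∀ r d, Odd r → ∀ v ∈ D d, T r v ∈ D (d - r))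
    (hvac : ∀ r : ℤ, Odd r → 0 < r → T r vac = 0)
    (hspan : Submodule.span K {v : M | ∃ L : List ℤ, (∀ r ∈ L, Odd r) ∧
        v = L.foldr (fun r w => T r w) vac} = ⊤)
    (hrel : ∀ r s : ℤ, Odd r → Odd s → ∀ v : M,
      ∑ᶠ l : ℕ, f l • ((T (r - 2 * l)) ((T (s + 2 * l)) v)
          - (T (s - 2 * l)) ((T (r + 2 * l)) v))
        = (if r + s = 0 then c * (p ^ (-r) - p ^ r) else 0) • v) :
    Submodule.span K {v : M | ∃ L : List ℤ, (∀ r ∈ L, Odd r ∧ 0 < r) ∧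
        L.Pairwise (· ≥ ·) ∧ v = L.foldr (fun r w => T (-r) w) vac} = ⊤ := by
  have main : ∀ L : List ℤ, (∀ r ∈ L, Odd r) →
      L.foldr (fun r w => T r w) vac ∈ Submodule.span K {v : M | ∃ L : List ℤ,
        (∀ r ∈ L, Odd r ∧ 0 < r) ∧ L.Pairwise (· ≥ ·) ∧
        v = L.foldr (fun r w => T (-r) w) vac} := by
    intro L
    induction L with
    | nil =>
      intro _
      exact Submodule.subset_span ⟨[], by simp, List.Pairwise.nil, rfl⟩
    | cons t L ih =>
      intro h
      have ht := h t (List.mem_cons_self)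
      have hx := ih (fun r hr => h r (List.mem_cons_of_mem _ hr))
      simp only [List.foldr_cons]
      refine Submodule.span_induction (p := fun x _ => T t x ∈ Submodule.span K
        {v : M | ∃ L : List ℤ, (∀ r ∈ L, Odd r ∧ 0 < r) ∧ L.Pairwise (· ≥ ·) ∧
          v = L.foldr (fun r w => T (-r) w) vac}) ?_ ?_ ?_ ?_ hx
      · rintro y ⟨J, hJ1, hJ2, rfl⟩
        show T t (J.foldr (fun r w => T (-r) w) vac) ∈ _
        have hmem := straighten_aux T vac f hf0 c p hvac hrel (J.length + 1)
          ((t + J.sum).toNat + 1) t J (Nat.lt_succ_self _) (Nat.lt_succ_self _) ht hJ1 hJ2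
        refine Submodule.span_mono ?_ hmem
        rintro v ⟨J', a, b, _, _, e⟩
        exact ⟨J', a, b, e⟩
      · show T t (0 : M) ∈ _
        rw [map_zero]; exact zero_mem _
      · intro x y _ _ hx hy
        show T t (x + y) ∈ _
        rw [map_add]; exact add_mem hx hy
      · intro a x _ hx
        show T t (a • x) ∈ _
        rw [map_smul]; exact Submodule.smul_mem _ _ hx
  rw [eq_top_iff, ← hspan]
  refine Submodule.span_le.mpr ?_
  rintro v ⟨L, hL, rfl⟩
  exact main L hL
end
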